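/- arXiv:2310.15069 — 4 statements merged into one kernel-verified Lean document; each statement's English description precedes it below -/
import Mathlib

section
/- Let S and D be symmetric positive definite p×p real matrices and let e_j be the j-th standard basis vector. Then for a real scalar δ, both D - δ e_j e_j^T and S + δ e_j e_j^T are positive semidefinite if and only if -1/(e_j^T S^{-1} e_j) ≤ δ ≤ 1/(e_j^T D^{-1} e_j). -/
/-!
For `A` positive definite, `A + c • u uᵀ` is positive semidefinite exactly when
`1 + c uᵀ A⁻¹ u ≥ 0`: necessity by testing the quadratic form on `A⁻¹ u`, sufficiency by the
Cauchy–Schwarz inequality `(uᵀ x)² ≤ (uᵀ A⁻¹ u) (xᵀ A x)` for the inner product defined by `A`.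
The theorem is this criterion for `u = e_j`, applied to `D` with `c = -δ` and to `S` with `c = δ`.
-/

open Matrix

namespace Matrix

variable {n : Type*} [Fintype n] [DecidableEq n]

theorem PosSemidef.dotProduct_mulVec_sq_le {A : Matrix n n ℝ} (hA : A.PosSemidef) (x y : n → ℝ) :
    (x ⬝ᵥ A *ᵥ y) ^ 2 ≤ (x ⬝ᵥ A *ᵥ x) * (y ⬝ᵥ A *ᵥ y) := by
  have hsymm : (toLinearMap₂' ℝ A).IsSymm := ⟨fun x y => by
    rw [RingHom.id_apply, toLinearMap₂'_apply', toLinearMap₂'_apply', dotProduct_comm,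
      dotProduct_mulVec, ← mulVec_transpose, ← conjTranspose_eq_transpose_of_trivial,
      hA.isHermitian.eq]⟩
  simpa only [toLinearMap₂'_apply'] using
    LinearMap.BilinForm.apply_sq_le_of_symm (toLinearMap₂' ℝ A)
      (fun z => by
        simpa only [toLinearMap₂'_apply', star_trivial] using hA.dotProduct_mulVec_nonneg z)
      hsymm x y

theorem PosDef.mulVec_inv_mulVec {A : Matrix n n ℝ} (hA : A.PosDef) (u : n → ℝ) :
    A *ᵥ (A⁻¹ *ᵥ u) = u := by
  rw [mulVec_mulVec, mul_nonsing_inv _ ((isUnit_iff_isUnit_det A).mp hA.isUnit), one_mulVec]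

theorem PosDef.sq_dotProduct_le {A : Matrix n n ℝ} (hA : A.PosDef) (u x : n → ℝ) :
    (u ⬝ᵥ x) ^ 2 ≤ (u ⬝ᵥ A⁻¹ *ᵥ u) * (x ⬝ᵥ A *ᵥ x) := by
  have := hA.posSemidef.dotProduct_mulVec_sq_le x (A⁻¹ *ᵥ u)
  rwa [hA.mulVec_inv_mulVec, dotProduct_comm x u, dotProduct_comm (A⁻¹ *ᵥ u) u, mul_comm] at this

theorem posSemidef_add_smul_vecMulVec_iff {A : Matrix n n ℝ} (hA : A.PosDef) (u : n → ℝ) (c : ℝ) :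
    (A + c • vecMulVec u u).PosSemidef ↔ 0 ≤ 1 + c * (u ⬝ᵥ A⁻¹ *ᵥ u) := by
  have hquad (x : n → ℝ) :
      x ⬝ᵥ (A + c • vecMulVec u u) *ᵥ x = x ⬝ᵥ A *ᵥ x + c * (u ⬝ᵥ x) ^ 2 := by
    simp only [add_mulVec, dotProduct_add, smul_mulVec, dotProduct_smul, vecMulVec_mulVec,
      op_smul_eq_smul, smul_eq_mul, dotProduct_comm x u]
    ring
  set q := u ⬝ᵥ A⁻¹ *ᵥ u
  have hq : 0 ≤ q := by
    simpa only [star_trivial] using hA.inv.posSemidef.dotProduct_mulVec_nonneg u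
  constructor
  · intro h
    have htest : 0 ≤ q * (1 + c * q) := by
      have := h.dotProduct_mulVec_nonneg (A⁻¹ *ᵥ u)
      rw [star_trivial, hquad, hA.mulVec_inv_mulVec, dotProduct_comm] at this
      linarith
    rcases hq.eq_or_lt with hq0 | hqpos
    · simp [← hq0]
    · exact nonneg_of_mul_nonneg_right htest hqpos
  · intro h
    have hH : (A + c • vecMulVec u u).IsHermitian :=
      hA.isHermitian.add ((posSemidef_vecMulVec_self_star u).isHermitian.smul (.all c))
    refine PosSemidef.of_dotProduct_mulVec_nonneg hH fun x => ?_
    rw [star_trivial, hquad]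
    have hx : 0 ≤ x ⬝ᵥ A *ᵥ x := by
      simpa only [star_trivial] using hA.posSemidef.dotProduct_mulVec_nonneg x
    have hcs := hA.sq_dotProduct_le u x
    rcases le_or_gt 0 c with hc | hc
    · positivity
    · nlinarith [mul_le_mul_of_nonpos_left hcs hc.le]

end Matrix

theorem stmt_0 (p : ℕ) (S D : Matrix (Fin p) (Fin p) ℝ)
    (hS : S.PosDef) (hD : D.PosDef) (j : Fin p) (δ : ℝ) :
    ((D - δ • vecMulVec (Pi.single j 1) (Pi.single j 1)).PosSemidef ∧
      (S + δ • vecMulVec (Pi.single j 1) (Pi.single j 1)).PosSemidef) ↔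
    (-1 / ((Pi.single j 1 : Fin p → ℝ) ⬝ᵥ (S⁻¹ *ᵥ Pi.single j 1)) ≤ δ ∧
      δ ≤ 1 / ((Pi.single j 1 : Fin p → ℝ) ⬝ᵥ (D⁻¹ *ᵥ Pi.single j 1))) := by
  have hS' : 0 < S⁻¹ j j := hS.inv.diag_pos
  have hD' : 0 < D⁻¹ j j := hD.inv.diag_pos
  rw [sub_eq_add_neg, ← neg_smul, posSemidef_add_smul_vecMulVec_iff hD,
    posSemidef_add_smul_vecMulVec_iff hS]
  simp only [mulVec_single_one, col_apply, single_dotProduct, one_mul]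
  rw [div_le_iff₀ hS', le_div_iff₀ hD']
  constructor <;> rintro ⟨h₁, h₂⟩ <;> constructor <;> linarith
end

section
/- Let Σ be a symmetric positive definite p×p matrix, S a symmetric p×p matrix, and m ≥ 1. Define the (m+1)p × (m+1)p block matrix G_S with diagonal blocks Σ and all off-diagonal blocks Σ - S. Then, provided S and (m+1)Σ - mS are invertible, trace(G_S^{-1}) = m·trace(S^{-1}) + trace(((m+1)Σ - mS)^{-1}). -/
open Matrix
open Kronecker

theorem stmt_9 (p m : ℕ) (hm : 1 ≤ m)
    (Sig S : Matrix (Fin p) (Fin p) ℝ) (hSig : Sig.PosDef) (hS : S.IsSymm)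
    (hSinv : IsUnit S.det)
    (hDinv : IsUnit (((m : ℝ) + 1) • Sig - (m : ℝ) • S).det)
    (G : Matrix (Fin (m + 1) × Fin p) (Fin (m + 1) × Fin p) ℝ)
    (hG : ∀ k l i j, G (k, i) (l, j) = if k = l then Sig i j else (Sig - S) i j) :
    (G⁻¹).trace = (m : ℝ) * (S⁻¹).trace + ((((m : ℝ) + 1) • Sig - (m : ℝ) • S)⁻¹).trace := by
  set D : Matrix (Fin p) (Fin p) ℝ := ((m : ℝ) + 1) • Sig - (m : ℝ) • S with hD
  set r : ℝ := (m : ℝ) + 1 with hr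
  have hrne : r ≠ 0 := by positivity
  have hSS : S * S⁻¹ = 1 := mul_nonsing_inv _ hSinv
  have hDD : D * D⁻¹ = 1 := mul_nonsing_inv _ hDinv
  set J : Matrix (Fin (m + 1)) (Fin (m + 1)) ℝ := Matrix.of fun _ _ => (1 : ℝ) with hJ
  set A : Matrix (Fin p) (Fin p) ℝ := Sig - S with hA
  set C : Matrix (Fin p) (Fin p) ℝ := r⁻¹ • (D⁻¹ - S⁻¹) with hC
  set H : Matrix (Fin (m + 1) × Fin p) (Fin (m + 1) × Fin p) ℝ :=
    J ⊗ₖ C + (1 : Matrix (Fin (m + 1)) (Fin (m + 1)) ℝ) ⊗ₖ S⁻¹ with hH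
  -- G as a Kronecker sum
  have hGk : G = J ⊗ₖ A + (1 : Matrix (Fin (m + 1)) (Fin (m + 1)) ℝ) ⊗ₖ S := by
    ext ⟨k, i⟩ ⟨l, j⟩
    rw [hG k l i j]
    by_cases hkl : k = l <;>
      simp [hkl, hJ, hA, kroneckerMap_apply, Matrix.one_apply, Matrix.sub_apply]
  -- J * J = r • J
  have hJJ : J * J = r • J := by
    ext i j
    simp [hJ, Matrix.mul_apply, Matrix.smul_apply, hr]
  -- r • A = D - S
  have hrA : r • A = D - S := by
    rw [hA, hD, hr, smul_sub]
    module
  -- key algebraic identity: r • (A * C) + A * S⁻¹ + S * C = 0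
  have hkey : r • (A * C) + A * S⁻¹ + S * C = 0 := by
    have hAD : A * D⁻¹ = r⁻¹ • (1 - S * D⁻¹) := by
      have h1 : (r • A) * D⁻¹ = 1 - S * D⁻¹ := by rw [hrA, sub_mul, hDD]
      calc A * D⁻¹ = r⁻¹ • ((r • A) * D⁻¹) := by
            rw [Matrix.smul_mul, smul_smul, inv_mul_cancel₀ hrne, one_smul]
        _ = r⁻¹ • (1 - S * D⁻¹) := by rw [h1]
    have hSC : S * C = r⁻¹ • (S * D⁻¹ - 1) := by
      rw [hC, Matrix.mul_smul, mul_sub, hSS]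
    have hrAC : r • (A * C) = A * D⁻¹ - A * S⁻¹ := by
      rw [hC, Matrix.mul_smul, smul_smul, mul_inv_cancel₀ hrne, one_smul, mul_sub]
    rw [hrAC, hAD, hSC]
    module
  have hGH : G * H = 1 := by
    rw [hGk, hH]
    rw [add_mul, mul_add, mul_add, ← mul_kronecker_mul, ← mul_kronecker_mul,
      ← mul_kronecker_mul, ← mul_kronecker_mul, hJJ, Matrix.one_mul, Matrix.mul_one,
      hSS, one_mul, one_kronecker_one, smul_kronecker, ← kronecker_smul]
    have h0 : J ⊗ₖ (r • (A * C)) + J ⊗ₖ (A * S⁻¹) + J ⊗ₖ (S * C) = 0 := by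
      rw [← kronecker_add, ← kronecker_add, hkey, kronecker_zero]
    rw [← add_assoc, h0, zero_add]
  have hGinv : G⁻¹ = H := inv_eq_right_inv hGH
  rw [hGinv, hH]
  rw [trace_add, trace_kronecker, trace_kronecker]
  have htrJ : J.trace = r := by
    simp [hJ, Matrix.trace, Matrix.diag, hr]
  have htr1 : (1 : Matrix (Fin (m + 1)) (Fin (m + 1)) ℝ).trace = r := by
    simp [Matrix.trace_one, hr]
  rw [htrJ, htr1, hC, trace_smul, trace_sub]
  rw [hr]
  field_simp
  have hm1 : (1 + (m : ℝ)) ≠ 0 := by positivity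
  linear_combination (D⁻¹.trace - S⁻¹.trace) * (mul_inv_cancel₀ hm1)
end

section
/- Let Σ be symmetric positive definite, m ≥ 1, and S symmetric. The block matrix G_S (diagonal blocks Σ, off-diagonal blocks Σ - S, (m+1)×(m+1) blocks) is positive semidefinite if and only if S ⪰ 0 and ((m+1)/m)Σ - S ⪰ 0. -/
/-!
Write `J` for the all-ones matrix of size `c = m + 1`, so that `G = J ⊗ (Σ - S) + I ⊗ S`.
Compressing `G` by `w ⊗ I` gives `(w* J w) (Σ - S) + |w|² S`: the choice `w = e_k - e_l` yields
`2 S`, and `w = 1` yields `c (c (Σ - S) + S) = c m ((m + 1)/m Σ - S)`. Conversely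
`G = (J / c) ⊗ (c (Σ - S) + S) + (I - J / c) ⊗ S`, where `J / c` and `I - J / c` are orthogonal
projections, and Kronecker products of positive semidefinite matrices are positive semidefinite.
-/

open Matrix
open scoped Kronecker ComplexOrder

namespace Matrix

variable {ι n 𝕜 : Type*} [RCLike 𝕜]

lemma posSemidef_real_smul_iff {M : Matrix n n 𝕜} {c : ℝ} (hc : 0 < c) :
    (c • M).PosSemidef ↔ M.PosSemidef :=
  ⟨fun h => by simpa [smul_smul, inv_mul_cancel₀ hc.ne'] using h.smul (inv_nonneg.mpr hc.le),
    fun h => h.smul hc.le⟩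

lemma PosSemidef.of_isHermitian_of_mul_self_eq [Fintype n] {P : Matrix n n 𝕜}
    (hP : P.IsHermitian) (hPP : P * P = P) : P.PosSemidef := by
  simpa [hP.eq, hPP] using posSemidef_conjTranspose_mul_self P

section AllOnes

variable [Fintype ι]

lemma allOnes_mul_allOnes : (of 1 : Matrix ι ι 𝕜) * of 1 = Fintype.card ι • of 1 := by
  ext; simp [mul_apply]

lemma posSemidef_allOnes : (of 1 : Matrix ι ι 𝕜).PosSemidef := by
  convert posSemidef_vecMulVec_self_star (1 : ι → 𝕜)
  ext; simp [vecMulVec]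

variable [DecidableEq ι] [Nonempty ι]

lemma posSemidef_one_sub_inv_card_smul_allOnes :
    (1 - (Fintype.card ι : ℝ)⁻¹ • of 1 : Matrix ι ι 𝕜).PosSemidef := by
  have hc : (Fintype.card ι : ℝ) ≠ 0 := by positivity
  refine .of_isHermitian_of_mul_self_eq (isHermitian_one.sub
    (posSemidef_allOnes.smul (by positivity)).isHermitian) ?_
  rw [sub_mul, mul_sub, mul_sub, smul_mul_smul_comm, allOnes_mul_allOnes, one_mul, mul_one,
    one_mul]
  match_scalars <;> grind

lemma allOnes_kronecker_add_one_kronecker_eq (A B : Matrix n n 𝕜) :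
    of 1 ⊗ₖ A + (1 : Matrix ι ι 𝕜) ⊗ₖ B =
      ((Fintype.card ι : ℝ)⁻¹ • of 1) ⊗ₖ (Fintype.card ι • A + B) +
        (1 - (Fintype.card ι : ℝ)⁻¹ • of 1) ⊗ₖ B := by
  have hc : (Fintype.card ι : 𝕜) ≠ 0 := Nat.cast_ne_zero.mpr Fintype.card_ne_zero
  ext ⟨k, i⟩ ⟨l, j⟩
  simp only [add_apply, smul_apply, sub_apply, kronecker_apply, of_apply, Pi.one_apply, one_apply]
  simp only [nsmul_eq_mul, RCLike.real_smul_eq_coe_mul, RCLike.ofReal_inv, RCLike.ofReal_natCast]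
  split_ifs <;> field_simp <;> ring

lemma PosSemidef.allOnes_kronecker_add_one_kronecker [Fintype n] {A B : Matrix n n 𝕜}
    (hB : B.PosSemidef) (hAB : (Fintype.card ι • A + B).PosSemidef) :
    (of 1 ⊗ₖ A + (1 : Matrix ι ι 𝕜) ⊗ₖ B).PosSemidef := by
  rw [allOnes_kronecker_add_one_kronecker_eq]
  exact ((posSemidef_allOnes.smul (by positivity)).kronecker hAB).add
    (posSemidef_one_sub_inv_card_smul_allOnes.kronecker hB)

end AllOnes

section Compression

variable [DecidableEq n]

variable (n) in
def colKroneckerOne (w : ι → 𝕜) : Matrix (ι × n) n 𝕜 :=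
  of fun x j => w x.1 * (1 : Matrix n n 𝕜) x.2 j

variable [Fintype ι] [Fintype n]

lemma conjTranspose_colKroneckerOne_mul_kronecker_mul (w : ι → 𝕜) (C : Matrix ι ι 𝕜)
    (D : Matrix n n 𝕜) :
    (colKroneckerOne n w)ᴴ * (C ⊗ₖ D) * colKroneckerOne n w =
      (star w ⬝ᵥ C *ᵥ w) • D := by
  ext i j
  simp [colKroneckerOne, mul_apply, Fintype.sum_prod_type, one_apply, dotProduct, mulVec,
    Finset.sum_mul, Finset.mul_sum, apply_ite (starRingEnd 𝕜), ite_mul]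
  rw [Finset.sum_comm]
  exact Finset.sum_congr rfl fun k _ => Finset.sum_congr rfl fun l _ => by ring

variable [DecidableEq ι]

lemma PosSemidef.of_allOnes_kronecker_add_one_kronecker [Nontrivial ι] {A B : Matrix n n 𝕜}
    (h : (of 1 ⊗ₖ A + (1 : Matrix ι ι 𝕜) ⊗ₖ B).PosSemidef) :
    B.PosSemidef ∧ (Fintype.card ι • A + B).PosSemidef := by
  have compress (w : ι → 𝕜) : ((star w ⬝ᵥ of 1 *ᵥ w) • A + (star w ⬝ᵥ w) • B).PosSemidef := by
    have := h.conjTranspose_mul_mul_same (colKroneckerOne n w)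
    rwa [Matrix.mul_add, Matrix.add_mul, conjTranspose_colKroneckerOne_mul_kronecker_mul,
      conjTranspose_colKroneckerOne_mul_kronecker_mul, one_mulVec] at this
  constructor
  · obtain ⟨k, l, hkl⟩ := exists_pair_ne ι
    set w : ι → 𝕜 := Pi.single k 1 - Pi.single l 1
    have hw : star w = w := by simp [w, star_sub, Pi.star_single]
    have hJw : (of 1 : Matrix ι ι 𝕜) *ᵥ w = 0 := by
      ext; simp [w, mulVec, dotProduct, Finset.sum_sub_distrib]
    have hww : w ⬝ᵥ w = 2 := by
      simp [w, dotProduct_sub, hkl, hkl.symm]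
      norm_num
    have := compress w
    rw [hw, hJw, hww, dotProduct_zero, zero_smul, zero_add, ← RCLike.ofReal_ofNat,
      ← RCLike.real_smul_eq_coe_smul] at this
    exact (posSemidef_real_smul_iff two_pos).mp this
  · have hJ : star 1 ⬝ᵥ (of 1 : Matrix ι ι 𝕜) *ᵥ 1 = Fintype.card ι * Fintype.card ι := by
      simp [dotProduct, mulVec]
    have hone : star 1 ⬝ᵥ (1 : ι → 𝕜) = Fintype.card ι := by simp
    rw [← posSemidef_real_smul_iff (c := Fintype.card ι) (by positivity)]
    convert compress 1 using 1
    rw [hJ, hone, RCLike.real_smul_eq_coe_smul (K := 𝕜), RCLike.ofReal_natCast, smul_add,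
      ← Nat.cast_smul_eq_nsmul 𝕜, smul_smul]

theorem posSemidef_allOnes_kronecker_add_one_kronecker_iff [Nontrivial ι] {A B : Matrix n n 𝕜} :
    (of 1 ⊗ₖ A + (1 : Matrix ι ι 𝕜) ⊗ₖ B).PosSemidef ↔
      B.PosSemidef ∧ (Fintype.card ι • A + B).PosSemidef :=
  ⟨PosSemidef.of_allOnes_kronecker_add_one_kronecker,
    fun h => h.1.allOnes_kronecker_add_one_kronecker h.2⟩

end Compression

end Matrix

theorem stmt_11_general (p m : ℕ) (hm : 1 ≤ m)
    (Sig S : Matrix (Fin p) (Fin p) ℝ)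
    (G : Matrix (Fin (m + 1) × Fin p) (Fin (m + 1) × Fin p) ℝ)
    (hG : ∀ k l i j, G (k, i) (l, j) = if k = l then Sig i j else (Sig - S) i j) :
    G.PosSemidef ↔ S.PosSemidef ∧ ((((m : ℝ) + 1) / (m : ℝ)) • Sig - S).PosSemidef := by
  have hG_eq : G = of 1 ⊗ₖ (Sig - S) + (1 : Matrix (Fin (m + 1)) (Fin (m + 1)) ℝ) ⊗ₖ S := by
    ext ⟨k, i⟩ ⟨l, j⟩
    rw [hG]
    split_ifs with hkl <;> simp [one_apply, hkl]
  have : Nontrivial (Fin (m + 1)) := Fin.nontrivial_iff_two_le.mpr (by omega)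
  have hm_pos : (0 : ℝ) < m := by exact_mod_cast hm
  have hscale : Fintype.card (Fin (m + 1)) • (Sig - S) + S =
      (m : ℝ) • ((((m : ℝ) + 1) / (m : ℝ)) • Sig - S) := by
    rw [Fintype.card_fin, smul_sub (m : ℝ), smul_smul, mul_div_cancel₀ _ hm_pos.ne']
    module
  rw [hG_eq, posSemidef_allOnes_kronecker_add_one_kronecker_iff, hscale,
    posSemidef_real_smul_iff hm_pos]

theorem stmt_11 (p m : ℕ) (hm : 1 ≤ m)
    (Sig S : Matrix (Fin p) (Fin p) ℝ) (hSig : Sig.PosDef) (hS : S.IsSymm)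
    (G : Matrix (Fin (m + 1) × Fin p) (Fin (m + 1) × Fin p) ℝ)
    (hG : ∀ k l i j, G (k, i) (l, j) = if k = l then Sig i j else (Sig - S) i j) :
    G.PosSemidef ↔ S.PosSemidef ∧ ((((m : ℝ) + 1) / (m : ℝ)) • Sig - S).PosSemidef :=
  stmt_11_general p m hm Sig S G hG
end

section
/- Let D, S be symmetric positive definite with v^T D^{-1} v > 0 and v^T S^{-1} v > 0 for a nonzero vector v, and m ≥ 1. The value δ* = (m v^T S^{-1} v - v^T D^{-1} v)/((m+1)(v^T S^{-1} v)(v^T D^{-1} v)) satisfies -1/(v^T S^{-1} v) ≤ δ* ≤ 1/(v^T D^{-1} v). -/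
open Matrix

/-- `(m a - b) / ((m + 1) a b) = m / ((m + 1) b) - 1 / ((m + 1) a)`, a difference of a nonnegative
term at most `1 / b` and a nonpositive term at least `-1 / a`. -/
lemma neg_one_div_le_sub_div_and_le_one_div {a b m : ℝ} (ha : 0 < a) (hb : 0 < b) (hm : 0 ≤ m) :
    -1 / a ≤ (m * a - b) / ((m + 1) * a * b) ∧ (m * a - b) / ((m + 1) * a * b) ≤ 1 / b := by
  have hden : 0 < (m + 1) * a * b := by positivity
  constructor
  · rw [div_le_div_iff₀ ha hden]
    nlinarith [mul_nonneg (mul_pos ha ha).le hm]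
  · rw [div_le_div_iff₀ hden hb]
    nlinarith [mul_pos ha hb]

lemma Matrix.PosDef.dotProduct_inv_mulVec_pos {n : Type*} [Fintype n] [DecidableEq n]
    {A : Matrix n n ℝ} (hA : A.PosDef) {v : n → ℝ} (hv : v ≠ 0) : 0 < v ⬝ᵥ (A⁻¹ *ᵥ v) := by
  simpa using hA.inv.dotProduct_mulVec_pos hv

theorem stmt_16 (p : ℕ) (S D : Matrix (Fin p) (Fin p) ℝ)
    (hS : S.PosDef) (hD : D.PosDef) (v : Fin p → ℝ) (hv : v ≠ 0)
    (m : ℝ) (hm : 1 ≤ m) :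
    -1 / (v ⬝ᵥ (S⁻¹ *ᵥ v)) ≤
        (m * (v ⬝ᵥ (S⁻¹ *ᵥ v)) - v ⬝ᵥ (D⁻¹ *ᵥ v)) /
          ((m + 1) * (v ⬝ᵥ (S⁻¹ *ᵥ v)) * (v ⬝ᵥ (D⁻¹ *ᵥ v))) ∧
      (m * (v ⬝ᵥ (S⁻¹ *ᵥ v)) - v ⬝ᵥ (D⁻¹ *ᵥ v)) /
          ((m + 1) * (v ⬝ᵥ (S⁻¹ *ᵥ v)) * (v ⬝ᵥ (D⁻¹ *ᵥ v))) ≤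
        1 / (v ⬝ᵥ (D⁻¹ *ᵥ v)) :=
  neg_one_div_le_sub_div_and_le_one_div (hS.dotProduct_inv_mulVec_pos hv)
    (hD.dotProduct_inv_mulVec_pos hv) (zero_le_one.trans hm)
end
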